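/- arXiv:2202.13682 — 9 statements merged into one kernel-verified Lean document; each statement's English description precedes it below -/
import Mathlib

section
/- Let O be a nonsymmetric operad. An element π = (π₁, π₂) ∈ O^comp(2) is a multiplication on the operad O^comp (i.e. π ∘₁^comp π = π ∘₂^comp π) if and only if π₁ and π₂ are multiplications on O (π₁ ∘₁ π₁ = π₁ ∘₂ π₁ and π₂ ∘₁ π₂ = π₂ ∘₂ π₂) satisfying the compatibility identity π₁ ∘₁ π₂ + π₂ ∘₁ π₁ = π₁ ∘₂ π₂ + π₂ ∘₂ π₁. -/
universe u v

/-- A nonsymmetric operad in the category of `k`-modules: a collection of `k`-modules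
`O n` for `n ≥ 1` (here defined for all `n : ℕ`, with only arities `≥ 1` relevant),
`k`-bilinear partial compositions `comp : O m → ℕ → O n → O (m + n - 1)` (the middle
argument is the 1-based position `i`, `1 ≤ i ≤ m`), and an identity element `one ∈ O 1`,
satisfying the usual sequential/parallel associativity and unit axioms. -/
structure NSOperad (k : Type u) [CommRing k] where
  O : ℕ → Type v
  [instAdd : ∀ n, AddCommGroup (O n)]
  [instMod : ∀ n, Module k (O n)]
  comp : ∀ {m n : ℕ}, O m → ℕ → O n → O (m + n - 1)
  one : O 1
  comp_add_left : ∀ {m n : ℕ} (f f' : O m) (i : ℕ) (g : O n),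
    comp (f + f') i g = comp f i g + comp f' i g
  comp_add_right : ∀ {m n : ℕ} (f : O m) (i : ℕ) (g g' : O n),
    comp f i (g + g') = comp f i g + comp f i g'
  comp_smul_left : ∀ {m n : ℕ} (c : k) (f : O m) (i : ℕ) (g : O n),
    comp (c • f) i g = c • comp f i g
  comp_smul_right : ∀ {m n : ℕ} (c : k) (f : O m) (i : ℕ) (g : O n),
    comp f i (c • g) = c • comp f i g
  assoc₁ : ∀ {m n p : ℕ} (f : O m) (g : O n) (h : O p) (i j : ℕ)
    (hi1 : 1 ≤ i) (him : i ≤ m) (hj1 : 1 ≤ j) (hjn : j ≤ n) (hp : 1 ≤ p),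
    comp (comp f i g) (i + j - 1) h =
      cast (congrArg O (by omega : m + (n + p - 1) - 1 = m + n - 1 + p - 1))
        (comp f i (comp g j h))
  assoc₂ : ∀ {m n p : ℕ} (f : O m) (g : O n) (h : O p) (i j : ℕ)
    (hi1 : 1 ≤ i) (hij : i < j) (hjm : j ≤ m) (hn : 1 ≤ n) (hp : 1 ≤ p),
    comp (comp f i g) (j + n - 1) h =
      cast (congrArg O (by omega : m + p - 1 + n - 1 = m + n - 1 + p - 1))
        (comp (comp f j h) i g)
  comp_one : ∀ {m : ℕ} (f : O m) (i : ℕ), 1 ≤ i → i ≤ m → comp f i one = f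
  one_comp : ∀ {m : ℕ} (f : O m), comp one 1 f = cast (congrArg O (by omega : m = 1 + m - 1)) f

attribute [instance] NSOperad.instAdd NSOperad.instMod

namespace NSOperad

variable {k : Type u} [CommRing k]

/-- A multiplication on a nonsymmetric operad: `π ∈ O(2)` with `π ∘₁ π = π ∘₂ π`. -/
def IsMult (𝒪 : NSOperad k) (π : 𝒪.O 2) : Prop :=
  𝒪.comp π 1 π = 𝒪.comp π 2 π

/-- The Gerstenhaber (degree `-1` graded Lie) bracket
`⟦f, g⟧ = Σᵢ (−1)^{(n−1)(i−1)} f ∘ᵢ g − (−1)^{(m−1)(n−1)} Σᵢ (−1)^{(m−1)(i−1)} g ∘ᵢ f`. -/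
def bracket (𝒪 : NSOperad k) {m n : ℕ} (f : 𝒪.O m) (g : 𝒪.O n) : 𝒪.O (m + n - 1) :=
  (∑ i ∈ Finset.Icc 1 m, ((-1 : ℤ) ^ ((n - 1) * (i - 1))) • 𝒪.comp f i g)
    - ((-1 : ℤ) ^ ((m - 1) * (n - 1))) •
        ∑ i ∈ Finset.Icc 1 n,
          ((-1 : ℤ) ^ ((m - 1) * (i - 1))) •
            cast (congrArg 𝒪.O (by omega : n + m - 1 = m + n - 1)) (𝒪.comp g i f)

end NSOperad

namespace NSOperad

variable {k : Type u} [CommRing k]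

/-- `O^comp(n) = O(n) ⊕ ⋯ ⊕ O(n)` (`n` copies); an element `f` is written
`(f₁, …, f_n)`, here as a function `Fin n → O n` (so `f_r = f ⟨r-1⟩` for `1 ≤ r ≤ n`). -/
abbrev OComp (𝒪 : NSOperad k) (n : ℕ) : Type v := Fin n → 𝒪.O n

/-- The partial compositions of `O^comp`: the `k`-th component of `f ∘ᵢ^comp g` is
`Σ_{r+s=k+1} f_r ∘ᵢ g_s` (1-based components; `kk : Fin (m+n-1)` is the 0-based index
of the `k = kk+1`-st component, and `p.1, p.2` are the 0-based indices of `r = p.1+1`,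
`s = p.2+1`). -/
def ccomp (𝒪 : NSOperad k) {m n : ℕ} (f : 𝒪.OComp m) (i : ℕ) (g : 𝒪.OComp n) :
    𝒪.OComp (m + n - 1) := fun kk =>
  ∑ p ∈ Finset.univ.filter
      (fun p : Fin m × Fin n => ((p.1 : ℕ) + 1) + ((p.2 : ℕ) + 1) = ((kk : ℕ) + 1) + 1),
    𝒪.comp (f p.1) i (g p.2)

/-- The identity element of `O^comp`, namely `1 ∈ O(1) = O^comp(1)`. -/
def cone (𝒪 : NSOperad k) : 𝒪.OComp 1 := fun _ => 𝒪.one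

/-- Transport along an equality of arities. -/
def ocast (𝒪 : NSOperad k) {a b : ℕ} (h : a = b) (f : 𝒪.OComp a) : 𝒪.OComp b := h ▸ f

end NSOperad

/-- An element `π = (π₁, π₂) ∈ O^comp(2)` is a multiplication on the
operad `O^comp` (i.e. `π ∘₁^comp π = π ∘₂^comp π`) iff `π₁` and `π₂` are multiplications
on `O` satisfying the compatibility identity
`π₁ ∘₁ π₂ + π₂ ∘₁ π₁ = π₁ ∘₂ π₂ + π₂ ∘₂ π₁`. -/
theorem NSOperad.comp_mult_iff_compatible_mult
    {k : Type u} [CommRing k] [CharZero k] (𝒪 : NSOperad k) (π₁ π₂ : 𝒪.O 2) :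
    𝒪.ccomp ![π₁, π₂] 1 ![π₁, π₂] = 𝒪.ccomp ![π₁, π₂] 2 ![π₁, π₂] ↔
      (𝒪.IsMult π₁ ∧ 𝒪.IsMult π₂ ∧
        𝒪.comp π₁ 1 π₂ + 𝒪.comp π₂ 1 π₁ = 𝒪.comp π₁ 2 π₂ + 𝒪.comp π₂ 2 π₁) := by
  constructor
  · intro h
    have h0 := congrFun h 0
    have h1 := congrFun h 1
    have h2 := congrFun h 2
    simp [ccomp, Finset.sum_filter, Fintype.sum_prod_type, Fin.sum_univ_succ, IsMult] at h0 h1 h2 ⊢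
    exact ⟨h0, h2, h1⟩
  · rintro ⟨h0, h2, h1⟩
    funext kk
    simp only [IsMult] at h0 h2
    fin_cases kk <;>
      simp [ccomp, Finset.sum_filter, Fintype.sum_prod_type, Fin.sum_univ_succ, h0, h2, h1]
end

section
/- Let O be a nonsymmetric operad and π ∈ O(2) a multiplication on O. Define δ_π : O(n) → O(n+1) by δ_π(f) = ⟦π, f⟧, where ⟦·,·⟧ is the Gerstenhaber bracket. Then δ_π ∘ δ_π = 0; that is, ⟦π, ⟦π, f⟧⟧ = 0 for every f ∈ O(n) and every n ≥ 1. -/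
universe u v

namespace NSOperad

variable {k : Type u} [CommRing k]

variable (𝒪 : NSOperad k)

/-- cast as an additive hom -/
def castO {a b : ℕ} (h : a = b) : 𝒪.O a →+ 𝒪.O b where
  toFun := cast (congrArg 𝒪.O h)
  map_zero' := by subst h; rfl
  map_add' := by subst h; intros; rfl

@[simp] lemma castO_apply {a b : ℕ} (h : a = b) (x : 𝒪.O a) :
    castO 𝒪 h x = cast (congrArg 𝒪.O h) x := rfl

lemma castO_castO {a b c : ℕ} (h : a = b) (h' : b = c) (x : 𝒪.O a) :
    castO 𝒪 h' (castO 𝒪 h x) = castO 𝒪 (h.trans h') x := by subst h; subst h'; rfl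

@[simp] lemma castO_rfl {a : ℕ} (x : 𝒪.O a) : castO 𝒪 rfl x = x := rfl

lemma castO_eq_zero_iff {a b : ℕ} (h : a = b) (x : 𝒪.O a) :
    castO 𝒪 h x = 0 ↔ x = 0 := by subst h; rfl

lemma castO_smul {a b : ℕ} (h : a = b) (c : ℤ) (x : 𝒪.O a) :
    castO 𝒪 h (c • x) = c • castO 𝒪 h x := map_zsmul _ _ _

lemma comp_castO_left {a b m : ℕ} (h : a = b) (x : 𝒪.O a) (i : ℕ) (g : 𝒪.O m) :
    𝒪.comp (castO 𝒪 h x) i g = castO 𝒪 (by rw [h]) (𝒪.comp x i g) := by subst h; rfl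

lemma comp_castO_right {a b m : ℕ} (h : a = b) (g : 𝒪.O m) (i : ℕ) (x : 𝒪.O a) :
    𝒪.comp g i (castO 𝒪 h x) = castO 𝒪 (by rw [h]) (𝒪.comp g i x) := by subst h; rfl

variable (π : 𝒪.O 2)

/-- Hochschild coface maps -/
def faceFun (n i : ℕ) (f : 𝒪.O n) : 𝒪.O (n + 1) :=
  if i = 0 then castO 𝒪 (by omega : 2 + n - 1 = n + 1) (𝒪.comp π 2 f)
  else if i ≤ n then castO 𝒪 (by omega : n + 2 - 1 = n + 1) (𝒪.comp f i π)
  else castO 𝒪 (by omega : 2 + n - 1 = n + 1) (𝒪.comp π 1 f)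

def face (n i : ℕ) : 𝒪.O n →+ 𝒪.O (n + 1) :=
  AddMonoidHom.mk' (faceFun 𝒪 π n i) (by
    intro a b
    unfold faceFun
    split_ifs <;> simp [𝒪.comp_add_left, 𝒪.comp_add_right, map_add])

lemma face_apply (n i : ℕ) (f : 𝒪.O n) : face 𝒪 π n i f = faceFun 𝒪 π n i f := rfl

def D (n : ℕ) : 𝒪.O n →+ 𝒪.O (n + 1) :=
  AddMonoidHom.mk' (fun f => ∑ i ∈ Finset.range (n + 2), ((-1 : ℤ) ^ i) • face 𝒪 π n i f)
    (by intro a b; simp [map_add, smul_add, Finset.sum_add_distrib])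

lemma D_apply (n : ℕ) (f : 𝒪.O n) :
    D 𝒪 π n f = ∑ i ∈ Finset.range (n + 2), ((-1 : ℤ) ^ i) • face 𝒪 π n i f := rfl


end NSOperad

section
variable {k : Type u} [CommRing k] (𝒪 : NSOperad k)
open NSOperad

lemma NSOperad.castO_cast {a b c : ℕ} (h : a = b) (h' : b = c) (x : 𝒪.O a) :
    castO 𝒪 h' (cast (congrArg 𝒪.O h) x) = castO 𝒪 (h.trans h') x := by
  subst h; subst h'; rfl

lemma NSOperad.assoc₁' {m n' p : ℕ} (F : 𝒪.O m) (G : 𝒪.O n') (H : 𝒪.O p) (i j : ℕ)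
    (hi1 : 1 ≤ i) (him : i ≤ m) (hj1 : 1 ≤ j) (hjn : j ≤ n') (hp : 1 ≤ p) :
    𝒪.comp F i (𝒪.comp G j H) =
      castO 𝒪 (by omega : m + n' - 1 + p - 1 = m + (n' + p - 1) - 1)
        (𝒪.comp (𝒪.comp F i G) (i + j - 1) H) := by
  rw [𝒪.assoc₁ F G H i j hi1 him hj1 hjn hp]
  exact (castO_cast 𝒪 (by omega : m + (n' + p - 1) - 1 = m + n' - 1 + p - 1)
    (by omega : m + n' - 1 + p - 1 = m + (n' + p - 1) - 1) _).symm

lemma NSOperad.assoc₂' {m n' p : ℕ} (F : 𝒪.O m) (G : 𝒪.O n') (H : 𝒪.O p) (i j : ℕ)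
    (hi1 : 1 ≤ i) (hij : i < j) (hjm : j ≤ m) (hn : 1 ≤ n') (hp : 1 ≤ p) :
    𝒪.comp (𝒪.comp F j H) i G =
      castO 𝒪 (by omega : m + n' - 1 + p - 1 = m + p - 1 + n' - 1)
        (𝒪.comp (𝒪.comp F i G) (j + n' - 1) H) := by
  rw [𝒪.assoc₂ F G H i j hi1 hij hjm hn hp]
  exact (castO_cast 𝒪 (by omega : m + p - 1 + n' - 1 = m + n' - 1 + p - 1)
    (by omega : m + n' - 1 + p - 1 = m + p - 1 + n' - 1) _).symm

end

section
variable {k : Type u} [CommRing k] (𝒪 : NSOperad k) (π : 𝒪.O 2)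
open NSOperad

lemma NSOperad.castO_inj' {a b : ℕ} {h h' : a = b} {x y : 𝒪.O a}
    (H : castO 𝒪 h x = castO 𝒪 h' y) : x = y := by subst h; exact H

lemma NSOperad.faceFun_zero (n : ℕ) (f : 𝒪.O n) :
    faceFun 𝒪 π n 0 f = castO 𝒪 (by omega : 2 + n - 1 = n + 1) (𝒪.comp π 2 f) := by
  unfold faceFun; rw [if_pos rfl]

lemma NSOperad.faceFun_mid (n i : ℕ) (h1 : 1 ≤ i) (h2 : i ≤ n) (f : 𝒪.O n) :
    faceFun 𝒪 π n i f = castO 𝒪 (by omega : n + 2 - 1 = n + 1) (𝒪.comp f i π) := by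
  unfold faceFun; rw [if_neg (by omega), if_pos h2]

lemma NSOperad.faceFun_top (n i : ℕ) (h : n < i) (f : 𝒪.O n) :
    faceFun 𝒪 π n i f = castO 𝒪 (by omega : 2 + n - 1 = n + 1) (𝒪.comp π 1 f) := by
  unfold faceFun; rw [if_neg (by omega), if_neg (by omega)]

set_option maxHeartbeats 1000000 in
lemma NSOperad.face_comm (hπ : 𝒪.IsMult π) (n : ℕ) (hn : 1 ≤ n) (i j : ℕ)
    (hij : i ≤ j) (hj : j ≤ n + 1) (f : 𝒪.O n) :
    face 𝒪 π (n+1) i (face 𝒪 π n j f) = face 𝒪 π (n+1) (j+1) (face 𝒪 π n i f) := by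
  have hmul : 𝒪.comp π 1 π = 𝒪.comp π 2 π := hπ
  by_cases hi0 : i = 0
  · subst hi0
    by_cases hj0 : j = 0
    · -- Case A : i = j = 0
      subst hj0
      simp only [face_apply]
      rw [faceFun_zero, faceFun_mid 𝒪 π (n+1) 1 (by omega) (by omega), faceFun_zero]
      simp only [comp_castO_left, comp_castO_right, castO_castO]
      have h1 := 𝒪.assoc₁' π π f 2 2 (by omega) (by omega) (by omega) (by omega) hn
      have h2 := 𝒪.assoc₂' π π f 1 2 (by omega) (by omega) (by omega) (by omega) hn
      rw [hmul] at h2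
      rw [h1, h2]
      try simp only [castO_castO]
      try rfl
    · by_cases hjn : j ≤ n
      · -- Case B : i = 0, 1 ≤ j ≤ n
        have hj1 : 1 ≤ j := by omega
        simp only [face_apply]
        rw [faceFun_zero, faceFun_mid 𝒪 π n j hj1 hjn,
          faceFun_mid 𝒪 π (n+1) (j+1) (by omega) (by omega), faceFun_zero]
        simp only [comp_castO_left, comp_castO_right, castO_castO]
        have h1 := 𝒪.assoc₁' π f π 2 j (by omega) (by omega) hj1 hjn (by omega)
        rw [show 2 + j - 1 = j + 1 by omega] at h1
        rw [h1]
        try simp only [castO_castO]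
        try rfl
      · -- Case C : i = 0, j = n + 1
        have hj' : j = n + 1 := by omega
        subst hj'
        simp only [face_apply]
        rw [faceFun_zero, faceFun_top 𝒪 π n (n+1) (by omega),
          faceFun_top 𝒪 π (n+1) (n+1+1) (by omega), faceFun_zero]
        simp only [comp_castO_left, comp_castO_right, castO_castO]
        have h1 := 𝒪.assoc₁' π π f 2 1 (by omega) (by omega) (by omega) (by omega) hn
        have h2 := 𝒪.assoc₁' π π f 1 2 (by omega) (by omega) (by omega) (by omega) hn
        rw [show 2 + 1 - 1 = 2 by norm_num] at h1
        rw [show 1 + 2 - 1 = 2 by norm_num, hmul] at h2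
        rw [h1, h2]
        try simp only [castO_castO]
        try rfl
  · have hi1 : 1 ≤ i := by omega
    by_cases hjn : j ≤ n
    · by_cases hij' : i = j
      · -- Case D2 : 1 ≤ i = j ≤ n
        subst hij'
        simp only [face_apply]
        rw [faceFun_mid 𝒪 π n i hi1 hjn, faceFun_mid 𝒪 π (n+1) i hi1 (by omega),
          faceFun_mid 𝒪 π (n+1) (i+1) (by omega) (by omega)]
        simp only [comp_castO_left, comp_castO_right, castO_castO]
        have h1 := 𝒪.assoc₁' f π π i 1 hi1 hjn (by omega) (by omega) (by omega)
        have h2 := 𝒪.assoc₁' f π π i 2 hi1 hjn (by omega) (by omega) (by omega)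
        rw [show i + 1 - 1 = i by omega, hmul] at h1
        rw [show i + 2 - 1 = i + 1 by omega] at h2
        have core := castO_inj' 𝒪 (h1.symm.trans h2)
        rw [core]
        try rfl
      · -- Case D1 : 1 ≤ i < j ≤ n
        have hlt : i < j := by omega
        simp only [face_apply]
        rw [faceFun_mid 𝒪 π n j (by omega) hjn, faceFun_mid 𝒪 π n i hi1 (by omega),
          faceFun_mid 𝒪 π (n+1) i hi1 (by omega),
          faceFun_mid 𝒪 π (n+1) (j+1) (by omega) (by omega)]
        simp only [comp_castO_left, comp_castO_right, castO_castO]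
        have h1 := 𝒪.assoc₂' f π π i j hi1 hlt hjn (by omega) (by omega)
        rw [show j + 2 - 1 = j + 1 by omega] at h1
        rw [h1]
        try simp only [castO_castO]
        try rfl
    · -- j = n + 1
      have hj' : j = n + 1 := by omega
      subst hj'
      by_cases hin : i ≤ n
      · -- Case E : 1 ≤ i ≤ n, j = n + 1
        simp only [face_apply]
        rw [faceFun_top 𝒪 π n (n+1) (by omega), faceFun_mid 𝒪 π n i hi1 hin,
          faceFun_mid 𝒪 π (n+1) i hi1 (by omega),
          faceFun_top 𝒪 π (n+1) (n+1+1) (by omega)]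
        simp only [comp_castO_left, comp_castO_right, castO_castO]
        have h1 := 𝒪.assoc₁' π f π 1 i (by omega) (by omega) hi1 hin (by omega)
        rw [show 1 + i - 1 = i by omega] at h1
        rw [h1]
        try simp only [castO_castO]
        try rfl
      · -- Case F : i = j = n + 1
        have hi' : i = n + 1 := by omega
        subst hi'
        simp only [face_apply]
        rw [faceFun_top 𝒪 π n (n+1) (by omega),
          faceFun_mid 𝒪 π (n+1) (n+1) (by omega) (by omega),
          faceFun_top 𝒪 π (n+1) (n+1+1) (by omega)]
        simp only [comp_castO_left, comp_castO_right, castO_castO]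
        have h1 := 𝒪.assoc₂' π f π 1 2 (by omega) (by omega) (by omega) hn (by omega)
        have h2 := 𝒪.assoc₁' π π f 1 1 (by omega) (by omega) (by omega) (by omega) hn
        rw [show 1 + 1 - 1 = 1 by norm_num, hmul] at h2
        rw [h2]
        simp only [castO_castO]
        rw [h1]
        simp only [castO_castO]
        rw [show 𝒪.comp (𝒪.comp π 1 f) (2 + n - 1) π = 𝒪.comp (𝒪.comp π 1 f) (n + 1) π from
          congrArg (fun t => 𝒪.comp (𝒪.comp π 1 f) t π) (by omega)]
        try rfl

end

section
variable {k : Type u} [CommRing k] (𝒪 : NSOperad k) (π : 𝒪.O 2)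
open NSOperad

lemma NSOperad.D_D (hπ : 𝒪.IsMult π) (n : ℕ) (hn : 1 ≤ n) (f : 𝒪.O n) :
    D 𝒪 π (n+1) (D 𝒪 π n f) = 0 := by
  rw [D_apply 𝒪 π n f, map_sum]
  have step : ∀ j ∈ Finset.range (n+2), D 𝒪 π (n+1) ((-1:ℤ)^j • face 𝒪 π n j f)
      = ∑ i ∈ Finset.range (n+3), ((-1:ℤ))^(i+j) • face 𝒪 π (n+1) i (face 𝒪 π n j f) := by
    intro j _
    rw [map_zsmul, D_apply, Finset.smul_sum]
    refine Finset.sum_congr rfl fun i _ => ?_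
    rw [smul_smul, ← pow_add, add_comm j i]
  rw [Finset.sum_congr rfl step, ← Finset.sum_product']
  refine Finset.sum_involution
    (fun p _ => if p.2 ≤ p.1 then (p.2, p.1 + 1) else (p.2 - 1, p.1)) ?_ ?_ ?_ ?_
  · intro p hp
    simp only [Finset.mem_product, Finset.mem_range] at hp
    obtain ⟨hp1, hp2⟩ := hp
    try dsimp only
    by_cases h : p.2 ≤ p.1
    · rw [if_pos h]
      try dsimp only
      rw [face_comm 𝒪 π hπ n hn p.2 p.1 h (by omega) f, ← add_smul]
      convert zero_smul ℤ _
      rw [show p.1 + 1 + p.2 = (p.2 + p.1) + 1 by omega, pow_succ]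
      ring
    · rw [if_neg h]
      try dsimp only
      have hcomm := face_comm 𝒪 π hπ n hn p.1 (p.2 - 1) (by omega) (by omega) f
      rw [show p.2 - 1 + 1 = p.2 by omega] at hcomm
      rw [hcomm, ← add_smul]
      convert zero_smul ℤ _
      rw [show p.2 + p.1 = (p.1 + (p.2 - 1)) + 1 by omega, pow_succ]
      ring
  · intro p hp _
    try dsimp only
    by_cases h : p.2 ≤ p.1
    · rw [if_pos h]
      intro hc
      rw [Prod.ext_iff] at hc
      dsimp only at hc
      omega
    · rw [if_neg h]
      intro hc
      rw [Prod.ext_iff] at hc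
      dsimp only at hc
      omega
  · intro p hp
    simp only [Finset.mem_product, Finset.mem_range] at hp ⊢
    try dsimp only
    by_cases h : p.2 ≤ p.1
    · rw [if_pos h]
      try dsimp only
      omega
    · rw [if_neg h]
      try dsimp only
      omega
  · intro p hp
    try dsimp only
    by_cases h : p.2 ≤ p.1
    · rw [if_pos h]
      try dsimp only
      rw [if_neg (by omega)]
      rw [Prod.ext_iff]
      try dsimp only
      omega
    · rw [if_neg h]
      try dsimp only
      rw [if_pos (by omega)]
      rw [Prod.ext_iff]
      try dsimp only
      omega

end

section
variable {k : Type u} [CommRing k] (𝒪 : NSOperad k) (π : 𝒪.O 2)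
open NSOperad

lemma NSOperad.castO_id {a : ℕ} (h : a = a) (x : 𝒪.O a) : castO 𝒪 h x = x := rfl

lemma NSOperad.bracket_eq {N : ℕ} (hN : 1 ≤ N) (g : 𝒪.O N) :
    𝒪.bracket π g =
      castO 𝒪 (by omega : N + 1 = 2 + N - 1) (((-1 : ℤ) ^ (N - 1)) • D 𝒪 π N g) := by
  have hL : 𝒪.bracket π g =
      𝒪.comp π 1 g + ((-1 : ℤ) ^ (N - 1)) • 𝒪.comp π 2 g
        - ((-1 : ℤ) ^ (N - 1)) •
            ∑ i ∈ Finset.range N,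
              ((-1 : ℤ) ^ i) • castO 𝒪 (by omega : N + 2 - 1 = 2 + N - 1)
                (𝒪.comp g (i + 1) π) := by
    unfold NSOperad.bracket
    rw [show ((2 : ℕ) - 1) = 1 by norm_num]
    simp only [one_mul]
    rw [show (Finset.Icc 1 2 : Finset ℕ) = {1, 2} by decide]
    rw [Finset.sum_insert (by decide), Finset.sum_singleton]
    rw [show (N - 1) * (1 - 1) = 0 by norm_num, pow_zero, one_smul]
    rw [show (N - 1) * (2 - 1) = N - 1 by norm_num]
    rw [← Finset.Ico_add_one_right_eq_Icc, Finset.sum_Ico_eq_sum_range, show N + 1 - 1 = N by omega]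
    have : ∑ i ∈ Finset.range N,
        ((-1 : ℤ) ^ (1 + i - 1)) •
          cast (congrArg 𝒪.O (by omega : N + 2 - 1 = 2 + N - 1)) (𝒪.comp g (1 + i) π)
        = ∑ i ∈ Finset.range N,
            ((-1 : ℤ) ^ i) • castO 𝒪 (by omega : N + 2 - 1 = 2 + N - 1)
              (𝒪.comp g (i + 1) π) := by
      refine Finset.sum_congr rfl fun i _ => ?_
      rw [show 1 + i - 1 = i by omega, show 1 + i = i + 1 by omega]
      rfl
    rw [this]
  rw [hL]
  -- now compute the RHS
  rw [map_zsmul, D_apply, Finset.sum_range_succ, Finset.sum_range_succ']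
  rw [map_add, map_add, smul_add, smul_add]
  -- piece T0 : i = 0
  have hT0 : ((-1 : ℤ) ^ (N - 1)) •
      castO 𝒪 (by omega : N + 1 = 2 + N - 1) ((-1 : ℤ) ^ 0 • face 𝒪 π N 0 g)
      = ((-1 : ℤ) ^ (N - 1)) • 𝒪.comp π 2 g := by
    rw [pow_zero, one_smul, face_apply, faceFun_zero, castO_castO, castO_id]
  -- piece T2 : i = N + 1
  have hT2 : ((-1 : ℤ) ^ (N - 1)) •
      castO 𝒪 (by omega : N + 1 = 2 + N - 1) ((-1 : ℤ) ^ (N + 1) • face 𝒪 π N (N + 1) g)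
      = 𝒪.comp π 1 g := by
    rw [face_apply, faceFun_top 𝒪 π N (N + 1) (by omega), map_zsmul, castO_castO, castO_id,
      smul_smul, ← pow_add, show N - 1 + (N + 1) = 2 * N by omega, pow_mul]
    norm_num
  -- piece T1 : middle
  have hT1 : ((-1 : ℤ) ^ (N - 1)) •
      castO 𝒪 (by omega : N + 1 = 2 + N - 1)
        (∑ i ∈ Finset.range N, ((-1 : ℤ) ^ (i + 1)) • face 𝒪 π N (i + 1) g)
      = -(((-1 : ℤ) ^ (N - 1)) •
          ∑ i ∈ Finset.range N,
            ((-1 : ℤ) ^ i) • castO 𝒪 (by omega : N + 2 - 1 = 2 + N - 1)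
              (𝒪.comp g (i + 1) π)) := by
    rw [map_sum, Finset.smul_sum, Finset.smul_sum, ← Finset.sum_neg_distrib]
    refine Finset.sum_congr rfl fun i hi => ?_
    rw [Finset.mem_range] at hi
    rw [face_apply, faceFun_mid 𝒪 π N (i + 1) (by omega) (by omega), map_zsmul,
      castO_castO, smul_smul, smul_smul, ← neg_smul,
      show ((-1 : ℤ)) ^ (N - 1) * (-1) ^ (i + 1) = -((-1 : ℤ) ^ (N - 1) * (-1) ^ i) from by
        rw [pow_succ]; ring]
    try rfl
  rw [hT0, hT2, hT1]
  abel

end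

section
variable {k : Type u} [CommRing k] (𝒪 : NSOperad k) (π : 𝒪.O 2)
open NSOperad

lemma NSOperad.D_castO {a b : ℕ} (h : a = b) (x : 𝒪.O a) :
    D 𝒪 π b (castO 𝒪 h x) = castO 𝒪 (by rw [h] : a + 1 = b + 1) (D 𝒪 π a x) := by
  subst h; rfl

theorem NSOperad.bracket_mult_squares_to_zero'
    (hπ : 𝒪.IsMult π) {n : ℕ} (hn : 1 ≤ n) (f : 𝒪.O n) :
    𝒪.bracket π (𝒪.bracket π f) = 0 := by
  rw [bracket_eq 𝒪 π (by omega : 1 ≤ 2 + n - 1) (𝒪.bracket π f),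
    bracket_eq 𝒪 π hn f, castO_eq_zero_iff]
  simp only [map_zsmul, D_castO, castO_smul, castO_castO]
  rw [D_D 𝒪 π hπ n hn f]
  simp only [map_zero, smul_zero]

end



/-- For a multiplication `π` on a nonsymmetric operad `𝒪`, the map
`δ_π(f) = ⟦π, f⟧` squares to zero: `⟦π, ⟦π, f⟧⟧ = 0` for every `f ∈ O(n)`, `n ≥ 1`. -/
theorem NSOperad.bracket_mult_squares_to_zero
    {k : Type u} [CommRing k] [CharZero k] (𝒪 : NSOperad k)
    (π : 𝒪.O 2) (hπ : 𝒪.IsMult π) {n : ℕ} (hn : 1 ≤ n) (f : 𝒪.O n) :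
    𝒪.bracket π (𝒪.bracket π f) = 0 :=
  NSOperad.bracket_mult_squares_to_zero' 𝒪 π hπ hn f
end

section
/- Let O be a nonsymmetric operad, π ∈ O(2) a multiplication on O, and R ∈ O(1) a Rota-Baxter element with respect to π, i.e. (π ∘₂ R) ∘₁ R = R ∘₁ (π ∘₁ R + π ∘₂ R). Then the pair (π_≺, π_≻) with π_≺ = π ∘₂ R and π_≻ = π ∘₁ R is a dendriform-multiplication on O, i.e. it satisfies π_≺ ∘₁ π_≺ = π_≺ ∘₂ (π_≺ + π_≻), π_≺ ∘₁ π_≻ = π_≻ ∘₂ π_≺, and π_≻ ∘₁ (π_≺ + π_≻) = π_≻ ∘₂ π_≻. -/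
universe u v

namespace NSOperad

variable {k : Type u} [CommRing k]

/-- A dendriform-multiplication on a nonsymmetric operad: a pair `(π_≺, π_≻)` of
elements of `O(2)` satisfying the three dendriform identities. -/
def IsDendMult (𝒪 : NSOperad k) (πl πr : 𝒪.O 2) : Prop :=
  𝒪.comp πl 1 πl = 𝒪.comp πl 2 (πl + πr) ∧
  𝒪.comp πl 1 πr = 𝒪.comp πr 2 πl ∧
  𝒪.comp πr 1 (πl + πr) = 𝒪.comp πr 2 πr

end NSOperad

/-- If `R ∈ O(1)` is a Rota-Baxter element with respect to a
multiplication `π`, i.e. `(π ∘₂ R) ∘₁ R = R ∘₁ (π ∘₁ R + π ∘₂ R)`, then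
`(π_≺, π_≻) = (π ∘₂ R, π ∘₁ R)` is a dendriform-multiplication on `𝒪`. -/
theorem NSOperad.rotaBaxter_element_gives_dendMult
    {k : Type u} [CommRing k] [CharZero k] (𝒪 : NSOperad k)
    (π : 𝒪.O 2) (hπ : 𝒪.IsMult π) (R : 𝒪.O 1)
    (hR : 𝒪.comp (𝒪.comp π 2 R) 1 R = 𝒪.comp R 1 (𝒪.comp π 1 R + 𝒪.comp π 2 R)) :
    𝒪.IsDendMult (𝒪.comp π 2 R) (𝒪.comp π 1 R) := by

  set a := 𝒪.comp π 2 R with ha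
  set b := 𝒪.comp π 1 R with hb
  -- swap lemma: (π∘₂R)∘₁X = (π∘₁X)∘₃R for X ∈ O 2
  have swap : ∀ X : 𝒪.O 2, 𝒪.comp (𝒪.comp π 1 X) 3 R = 𝒪.comp a 1 X := by
    intro X
    have := 𝒪.assoc₂ π X R 1 2 (by norm_num) (by norm_num) (by norm_num)
      (by norm_num) (by norm_num)
    simpa using this
  -- (π∘₁π)∘₂R = π∘₁(π∘₂R)
  have B1 : 𝒪.comp (𝒪.comp π 1 π) 2 R = 𝒪.comp π 1 a := by
    have := 𝒪.assoc₁ π π R 1 2 (by norm_num) (by norm_num) (by norm_num)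
      (by norm_num) (by norm_num)
    simpa using this
  -- (π∘₂π)∘₃R = π∘₂(π∘₂R)
  have D1 : 𝒪.comp (𝒪.comp π 2 π) 3 R = 𝒪.comp π 2 a := by
    have := 𝒪.assoc₁ π π R 2 2 (by norm_num) (by norm_num) (by norm_num)
      (by norm_num) (by norm_num)
    simpa using this
  -- (π∘₂π)∘₂R = π∘₂(π∘₁R)
  have D2 : 𝒪.comp (𝒪.comp π 2 π) 2 R = 𝒪.comp π 2 b := by
    have := 𝒪.assoc₁ π π R 2 1 (by norm_num) (by norm_num) (by norm_num)
      (by norm_num) (by norm_num)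
    simpa using this
  -- (π∘₁π)∘₁R = π∘₁(π∘₁R)
  have D3 : 𝒪.comp (𝒪.comp π 1 π) 1 R = 𝒪.comp π 1 b := by
    have := 𝒪.assoc₁ π π R 1 1 (by norm_num) (by norm_num) (by norm_num)
      (by norm_num) (by norm_num)
    simpa using this
  -- (π∘₂X)∘₂R = π∘₂(X∘₁R) for X ∈ O 2
  have E : ∀ X : 𝒪.O 2, 𝒪.comp (𝒪.comp π 2 X) 2 R = 𝒪.comp π 2 (𝒪.comp X 1 R) := by
    intro X
    have := 𝒪.assoc₁ π X R 2 1 (by norm_num) (by norm_num) (by norm_num)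
      (by norm_num) (by norm_num)
    simpa using this
  -- (π∘₂R)∘₂Y = π∘₂(R∘₁Y) for Y ∈ O 2
  have F : ∀ Y : 𝒪.O 2, 𝒪.comp a 2 Y = 𝒪.comp π 2 (𝒪.comp R 1 Y) := by
    intro Y
    have := 𝒪.assoc₁ π R Y 2 1 (by norm_num) (by norm_num) (by norm_num)
      (by norm_num) (by norm_num)
    simpa using this
  -- (π∘₁R)∘₁Y = π∘₁(R∘₁Y) for Y ∈ O 2
  have G : ∀ Y : 𝒪.O 2, 𝒪.comp b 1 Y = 𝒪.comp π 1 (𝒪.comp R 1 Y) := by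
    intro Y
    have := 𝒪.assoc₁ π R Y 1 1 (by norm_num) (by norm_num) (by norm_num)
      (by norm_num) (by norm_num)
    simpa using this
  -- (π∘₁X)∘₁R = π∘₁(X∘₁R) for X ∈ O 2
  have H : ∀ X : 𝒪.O 2, 𝒪.comp (𝒪.comp π 1 X) 1 R = 𝒪.comp π 1 (𝒪.comp X 1 R) := by
    intro X
    have := 𝒪.assoc₁ π X R 1 1 (by norm_num) (by norm_num) (by norm_num)
      (by norm_num) (by norm_num)
    simpa using this
  -- (π∘₁R)∘₂X = (π∘₂X)∘₁R for X ∈ O 2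
  have I2 : ∀ X : 𝒪.O 2, 𝒪.comp b 2 X = 𝒪.comp (𝒪.comp π 2 X) 1 R := by
    intro X
    have := 𝒪.assoc₂ π R X 1 2 (by norm_num) (by norm_num) (by norm_num)
      (by norm_num) (by norm_num)
    simpa using this
  -- parallel swap on O 3 element: (q∘₂R)∘₃R = (q∘₃R)∘₂R
  have P23 : ∀ q : 𝒪.O 3, 𝒪.comp (𝒪.comp q 2 R) 3 R = 𝒪.comp (𝒪.comp q 3 R) 2 R := by
    intro q
    have := 𝒪.assoc₂ q R R 2 3 (by norm_num) (by norm_num) (by norm_num)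
      (by norm_num) (by norm_num)
    simpa using this
  have P13 : ∀ q : 𝒪.O 3, 𝒪.comp (𝒪.comp q 1 R) 3 R = 𝒪.comp (𝒪.comp q 3 R) 1 R := by
    intro q
    have := 𝒪.assoc₂ q R R 1 3 (by norm_num) (by norm_num) (by norm_num)
      (by norm_num) (by norm_num)
    simpa using this
  have hR' : 𝒪.comp a 1 R = 𝒪.comp R 1 (a + b) := by
    rw [hR]; exact congrArg (𝒪.comp R 1) (add_comm b a)
  refine ⟨?_, ?_, ?_⟩
  · -- a∘₁a = a∘₂(a+b)
    calc 𝒪.comp a 1 a = 𝒪.comp (𝒪.comp π 1 a) 3 R := (swap a).symm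
      _ = 𝒪.comp (𝒪.comp (𝒪.comp π 1 π) 2 R) 3 R := by rw [B1]
      _ = 𝒪.comp (𝒪.comp (𝒪.comp π 2 π) 2 R) 3 R := by rw [hπ]
      _ = 𝒪.comp (𝒪.comp (𝒪.comp π 2 π) 3 R) 2 R := P23 _
      _ = 𝒪.comp (𝒪.comp π 2 a) 2 R := by rw [D1]
      _ = 𝒪.comp π 2 (𝒪.comp a 1 R) := E a
      _ = 𝒪.comp π 2 (𝒪.comp R 1 (a + b)) := by rw [hR']
      _ = 𝒪.comp a 2 (a + b) := (F _).symm
  · -- a∘₁b = b∘₂a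
    calc 𝒪.comp a 1 b = 𝒪.comp (𝒪.comp π 1 b) 3 R := (swap b).symm
      _ = 𝒪.comp (𝒪.comp (𝒪.comp π 1 π) 1 R) 3 R := by rw [D3]
      _ = 𝒪.comp (𝒪.comp (𝒪.comp π 2 π) 1 R) 3 R := by rw [hπ]
      _ = 𝒪.comp (𝒪.comp (𝒪.comp π 2 π) 3 R) 1 R := P13 _
      _ = 𝒪.comp (𝒪.comp π 2 a) 1 R := by rw [D1]
      _ = 𝒪.comp b 2 a := (I2 a).symm
  · -- b∘₁(a+b) = b∘₂b
    calc 𝒪.comp b 1 (a + b) = 𝒪.comp π 1 (𝒪.comp R 1 (a + b)) := G _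
      _ = 𝒪.comp π 1 (𝒪.comp a 1 R) := by rw [hR']
      _ = 𝒪.comp (𝒪.comp π 1 a) 1 R := (H a).symm
      _ = 𝒪.comp (𝒪.comp (𝒪.comp π 1 π) 2 R) 1 R := by rw [B1]
      _ = 𝒪.comp (𝒪.comp (𝒪.comp π 2 π) 2 R) 1 R := by rw [hπ]
      _ = 𝒪.comp (𝒪.comp π 2 b) 1 R := by rw [D2]
      _ = 𝒪.comp b 2 b := (I2 b).symm
end

section
/- Let O be a nonsymmetric operad. An element π = (π^[1], π^[2]) ∈ O^Dend(2) satisfies π ∘₁^Dend π = π ∘₂^Dend π if and only if (π^[1], π^[2]) is a dendriform-multiplication on O, i.e. π^[1] ∘₁ π^[1] = π^[1] ∘₂ (π^[1] + π^[2]), π^[1] ∘₁ π^[2] = π^[2] ∘₂ π^[1], and π^[2] ∘₁ (π^[1] + π^[2]) = π^[2] ∘₂ π^[2]. -/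
universe u v

namespace NSOperad

variable {k : Type u} [CommRing k]

/-- `O^Dend(n) = O(n) ⊕ ⋯ ⊕ O(n)` (`n` copies); an element `f` is written
`(f^[1], …, f^[n])`, here as a function `Fin n → O n`. -/
abbrev ODend (𝒪 : NSOperad k) (n : ℕ) : Type v := Fin n → 𝒪.O n

/-- The (1-based) `r`-th component `f^[r]` of `f ∈ O^Dend(n)` (zero if `r` is out of
range). -/
def dnth (𝒪 : NSOperad k) {n : ℕ} (f : 𝒪.ODend n) (r : ℕ) : 𝒪.O n :=
  if h : 1 ≤ r ∧ r ≤ n then f ⟨r - 1, by omega⟩ else 0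

/-- The partial compositions of `O^Dend` (components 1-based, `r = kk + 1`):
`(f ∘ᵢ^Dend g)^[r] = f^[r] ∘ᵢ (g^[1] + ⋯ + g^[n])` if `r ≤ i−1`;
`(f ∘ᵢ^Dend g)^[r] = f^[i] ∘ᵢ g^[r−i+1]` if `i ≤ r ≤ i+n−1`;
`(f ∘ᵢ^Dend g)^[r] = f^[r−n+1] ∘ᵢ (g^[1] + ⋯ + g^[n])` if `i+n ≤ r ≤ m+n−1`. -/
def dcomp (𝒪 : NSOperad k) {m n : ℕ} (f : 𝒪.ODend m) (i : ℕ) (g : 𝒪.ODend n) :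
    𝒪.ODend (m + n - 1) := fun kk =>
  let r := (kk : ℕ) + 1
  if r ≤ i - 1 then 𝒪.comp (𝒪.dnth f r) i (∑ s ∈ Finset.Icc 1 n, 𝒪.dnth g s)
  else if r ≤ i + n - 1 then 𝒪.comp (𝒪.dnth f i) i (𝒪.dnth g (r - i + 1))
  else 𝒪.comp (𝒪.dnth f (r - n + 1)) i (∑ s ∈ Finset.Icc 1 n, 𝒪.dnth g s)

/-- The identity element of `O^Dend`, namely `1 ∈ O(1) = O^Dend(1)`. -/
def done (𝒪 : NSOperad k) : 𝒪.ODend 1 := fun _ => 𝒪.one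

/-- Transport along an equality of arities. -/
def dcast (𝒪 : NSOperad k) {a b : ℕ} (h : a = b) (f : 𝒪.ODend a) : 𝒪.ODend b := h ▸ f

end NSOperad

/-- An element `π = (π^[1], π^[2]) ∈ O^Dend(2)` satisfies
`π ∘₁^Dend π = π ∘₂^Dend π` iff `(π^[1], π^[2])` is a dendriform-multiplication on `O`,
i.e. `π^[1] ∘₁ π^[1] = π^[1] ∘₂ (π^[1] + π^[2])`, `π^[1] ∘₁ π^[2] = π^[2] ∘₂ π^[1]`,
and `π^[2] ∘₁ (π^[1] + π^[2]) = π^[2] ∘₂ π^[2]`. -/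
theorem NSOperad.dend_mult_iff_dendMult
    {k : Type u} [CommRing k] [CharZero k] (𝒪 : NSOperad k) (π₁ π₂ : 𝒪.O 2) :
    𝒪.dcomp ![π₁, π₂] 1 ![π₁, π₂] = 𝒪.dcomp ![π₁, π₂] 2 ![π₁, π₂] ↔
      𝒪.IsDendMult π₁ π₂ := by
  have hsum : (∑ x ∈ Finset.Icc 1 2, if h : 1 ≤ x ∧ x ≤ 2 then
      (![π₁, π₂] : Fin 2 → 𝒪.O 2) ⟨x - 1, by omega⟩ else 0) = π₁ + π₂ := by
    rw [show (Finset.Icc 1 2 : Finset ℕ) = {1, 2} from rfl]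
    simp
  constructor
  · intro h
    refine ⟨?_, ?_, ?_⟩
    · have := congrFun h ⟨0, by norm_num⟩
      simpa [NSOperad.dcomp, NSOperad.dnth, hsum] using this
    · have := congrFun h ⟨1, by norm_num⟩
      simpa [NSOperad.dcomp, NSOperad.dnth, hsum] using this
    · have := congrFun h ⟨2, by norm_num⟩
      simpa [NSOperad.dcomp, NSOperad.dnth, hsum] using this
  · rintro ⟨h1, h2, h3⟩
    funext kk
    fin_cases kk <;>
      simp [NSOperad.dcomp, NSOperad.dnth, hsum, h1, h2, h3]
end

section
/- Let O be a nonsymmetric operad. The maps φ_n : O^Dend(n) → O(n) defined by φ_n(f) = f^[1] + ⋯ + f^[n] form a morphism of nonsymmetric operads φ : O^Dend → O; that is, φ_{m+n−1}(f ∘ᵢ^Dend g) = φ_m(f) ∘ᵢ φ_n(g) for all f ∈ O^Dend(m), g ∈ O^Dend(n), 1 ≤ i ≤ m, and φ₁(1) = 1. -/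
universe u v

/-!
The components of `f ∘ᵢ^Dend g` fall into three consecutive blocks: `f^[r] ∘ᵢ φ(g)` for `r < i`,
then `f^[i] ∘ᵢ g^[s]` for `s = 1, …, n`, then `f^[t] ∘ᵢ φ(g)` for `i < t ≤ m`. Summing the middle
block gives `f^[i] ∘ᵢ φ(g)` by linearity in the second slot, so the total is
`Σ_r f^[r] ∘ᵢ φ(g) = φ(f) ∘ᵢ φ(g)` by linearity in the first slot.
-/

open Finset

theorem Finset.sum_Icc_one_add {M : Type*} [AddCommMonoid M] (a : ℕ → M) {N p q : ℕ}
    (h : N = p + q) :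
    ∑ r ∈ Icc 1 N, a r = ∑ r ∈ Icc 1 p, a r + ∑ s ∈ Icc 1 q, a (p + s) := by
  subst h
  induction q with
  | zero => simp
  | succ q ih =>
    rw [← add_assoc, sum_Icc_succ_top (by omega), ih, sum_Icc_succ_top (by omega), add_assoc]
    rfl

namespace NSOperad

variable {k : Type u} [CommRing k] (𝒪 : NSOperad k)

theorem comp_sum_left {m n : ℕ} {ι : Type*} (s : Finset ι) (F : ι → 𝒪.O m) (i : ℕ)
    (g : 𝒪.O n) : 𝒪.comp (∑ x ∈ s, F x) i g = ∑ x ∈ s, 𝒪.comp (F x) i g :=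
  map_sum (AddMonoidHom.mk' (𝒪.comp · i g) fun f f' ↦ 𝒪.comp_add_left f f' i g) F s

theorem comp_sum_right {m n : ℕ} {ι : Type*} (s : Finset ι) (f : 𝒪.O m) (i : ℕ)
    (G : ι → 𝒪.O n) : 𝒪.comp f i (∑ x ∈ s, G x) = ∑ x ∈ s, 𝒪.comp f i (G x) :=
  map_sum (AddMonoidHom.mk' (𝒪.comp f i) fun g g' ↦ 𝒪.comp_add_right f i g g') G s

theorem dnth_dcomp {m n : ℕ} (f : 𝒪.ODend m) (i : ℕ) (g : 𝒪.ODend n) {r : ℕ} (hr : 1 ≤ r)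
    (hrmn : r ≤ m + n - 1) :
    𝒪.dnth (𝒪.dcomp f i g) r =
      if r ≤ i - 1 then 𝒪.comp (𝒪.dnth f r) i (∑ s ∈ Icc 1 n, 𝒪.dnth g s)
      else if r ≤ i + n - 1 then 𝒪.comp (𝒪.dnth f i) i (𝒪.dnth g (r - i + 1))
      else 𝒪.comp (𝒪.dnth f (r - n + 1)) i (∑ s ∈ Icc 1 n, 𝒪.dnth g s) := by
  simp only [dnth, dif_pos (And.intro hr hrmn), dcomp, Nat.sub_add_cancel hr]

theorem sum_dnth_dcomp {m n : ℕ} (f : 𝒪.ODend m) (g : 𝒪.ODend n) {i : ℕ} (hi : 1 ≤ i)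
    (him : i ≤ m) :
    ∑ r ∈ Icc 1 (m + n - 1), 𝒪.dnth (𝒪.dcomp f i g) r =
      𝒪.comp (∑ r ∈ Icc 1 m, 𝒪.dnth f r) i (∑ s ∈ Icc 1 n, 𝒪.dnth g s) := by
  set G := ∑ s ∈ Icc 1 n, 𝒪.dnth g s with hG
  -- With `i = p + 1` and `m = p + 1 + q` the block boundaries need no truncated subtraction.
  obtain ⟨p, q, rfl, rfl⟩ : ∃ p q, i = p + 1 ∧ m = p + 1 + q := ⟨i - 1, m - i, by omega, by omega⟩
  have left : ∀ r ∈ Icc 1 p, 𝒪.dnth (𝒪.dcomp f (p + 1) g) r = 𝒪.comp (𝒪.dnth f r) (p + 1) G := by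
    intro r hr
    rw [mem_Icc] at hr
    rw [dnth_dcomp _ _ _ _ hr.1 (by omega), if_pos (by omega)]
  have middle : ∀ s ∈ Icc 1 n,
      𝒪.dnth (𝒪.dcomp f (p + 1) g) (p + s) = 𝒪.comp (𝒪.dnth f (p + 1)) (p + 1) (𝒪.dnth g s) := by
    intro s hs
    rw [mem_Icc] at hs
    rw [dnth_dcomp _ _ _ _ (by omega) (by omega), if_neg (by omega), if_pos (by omega)]
    congr 2
    omega
  have right : ∀ t ∈ Icc 1 q, 𝒪.dnth (𝒪.dcomp f (p + 1) g) (p + n + t) =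
      𝒪.comp (𝒪.dnth f (p + 1 + t)) (p + 1) G := by
    intro t ht
    rw [mem_Icc] at ht
    rw [dnth_dcomp _ _ _ _ (by omega) (by omega), if_neg (by omega), if_neg (by omega)]
    congr 2
    omega
  rw [sum_Icc_one_add _ (show _ = p + n + q by omega), sum_Icc_one_add _ rfl, sum_congr rfl left,
    sum_congr rfl middle, sum_congr rfl right, ← comp_sum_right, ← hG, comp_sum_left,
    sum_Icc_one_add (p := p + 1) _ rfl, sum_Icc_one_add (p := p) (q := 1) _ rfl, Icc_self,
    sum_singleton]

theorem sum_dnth_done : ∑ r ∈ Icc 1 1, 𝒪.dnth 𝒪.done r = 𝒪.one := by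
  simp [dnth, done]

end NSOperad

theorem NSOperad.dend_sum_is_operad_morphism_general
    {k : Type u} [CommRing k] (𝒪 : NSOperad k) :
    (∀ {m n : ℕ} (f : 𝒪.ODend m) (g : 𝒪.ODend n) (i : ℕ), 1 ≤ i → i ≤ m →
      (∑ r ∈ Finset.Icc 1 (m + n - 1), 𝒪.dnth (𝒪.dcomp f i g) r) =
        𝒪.comp (∑ r ∈ Finset.Icc 1 m, 𝒪.dnth f r) i (∑ s ∈ Finset.Icc 1 n, 𝒪.dnth g s)) ∧
    (∑ r ∈ Finset.Icc 1 1, 𝒪.dnth 𝒪.done r) = 𝒪.one :=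
  ⟨fun f g _ hi him ↦ 𝒪.sum_dnth_dcomp f g hi him, 𝒪.sum_dnth_done⟩

/-- The maps `φ_n : O^Dend(n) → O(n)`, `φ_n(f) = f^[1] + ⋯ + f^[n]`,
form a morphism of nonsymmetric operads `φ : O^Dend → O`:
`φ_{m+n−1}(f ∘ᵢ^Dend g) = φ_m(f) ∘ᵢ φ_n(g)` for `1 ≤ i ≤ m`, and `φ₁(1) = 1`. -/
theorem NSOperad.dend_sum_is_operad_morphism
    {k : Type u} [CommRing k] [CharZero k] (𝒪 : NSOperad k) :
    (∀ {m n : ℕ} (f : 𝒪.ODend m) (g : 𝒪.ODend n) (i : ℕ), 1 ≤ i → i ≤ m →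
      (∑ r ∈ Finset.Icc 1 (m + n - 1), 𝒪.dnth (𝒪.dcomp f i g) r) =
        𝒪.comp (∑ r ∈ Finset.Icc 1 m, 𝒪.dnth f r) i (∑ s ∈ Finset.Icc 1 n, 𝒪.dnth g s)) ∧
    (∑ r ∈ Finset.Icc 1 1, 𝒪.dnth 𝒪.done r) = 𝒪.one :=
  NSOperad.dend_sum_is_operad_morphism_general 𝒪
end

section
/- Let Ω be a semigroup and (A, {≺_α, ≻_α}_{α∈Ω}) a dendriform-family algebra over a commutative ring k. Then the k-module A ⊗_k k[Ω], where k[Ω] is the free k-module on Ω, equipped with the bilinear operations determined on pure tensors by (a ⊗ α) ≺ (b ⊗ β) = (a ≺_β b) ⊗ αβ and (a ⊗ α) ≻ (b ⊗ β) = (a ≻_α b) ⊗ αβ, is a dendriform algebra; that is, (x ≺ y) ≺ z = x ≺ (y ≺ z + y ≻ z), (x ≻ y) ≺ z = x ≻ (y ≺ z), and (x ≺ y + x ≻ y) ≻ z = x ≻ (y ≻ z) for all x, y, z ∈ A ⊗_k k[Ω]. -/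
/-!
Both sides of each dendriform identity are `k`-trilinear in `x, y, z`, so it suffices to check
them on the spanning tensors `a ⊗ α`. There the two sides are `D`-products tensored with
`(αβ)γ` and `α(βγ)` respectively, and the three identities become exactly the three axioms of
a dendriform-family algebra.
-/

/-- A dendriform-family algebra over a semigroup `Ω`: a `k`-module `A` with `k`-bilinear
operations `≺_α, ≻_α : A ⊗ A → A` (`α ∈ Ω`) satisfying the three dendriform-family
identities. -/
structure DendFamily (k : Type*) (Ω : Type*) (A : Type*)
    [CommRing k] [Semigroup Ω] [AddCommGroup A] [Module k A] where
  prec : Ω → A →ₗ[k] A →ₗ[k] A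
  succ : Ω → A →ₗ[k] A →ₗ[k] A
  prec_prec : ∀ (α β : Ω) (a b c : A),
    prec β (prec α a b) c = prec (α * β) a (prec β b c + succ α b c)
  succ_prec : ∀ (α β : Ω) (a b c : A),
    prec β (succ α a b) c = succ α a (prec β b c)
  succ_succ : ∀ (α β : Ω) (a b c : A),
    succ (α * β) (prec β a b + succ α a b) c = succ α a (succ β b c)

open TensorProduct

namespace LinearMap

variable {R M N₁ N₂ P Q : Type*} [CommSemiring R] [AddCommMonoid M] [AddCommMonoid N₁]
  [AddCommMonoid N₂] [AddCommMonoid P] [AddCommMonoid Q] [Module R M] [Module R N₁]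
  [Module R N₂] [Module R P] [Module R Q]

def nestRight (B : M →ₗ[R] P →ₗ[R] Q) (C : N₁ →ₗ[R] N₂ →ₗ[R] P) :
    M →ₗ[R] N₁ →ₗ[R] N₂ →ₗ[R] Q :=
  (llcomp R N₂ P Q ∘ₗ B).compl₂ C

@[simp]
theorem nestRight_apply (B : M →ₗ[R] P →ₗ[R] Q) (C : N₁ →ₗ[R] N₂ →ₗ[R] P) (x : M) (y : N₁)
    (z : N₂) : nestRight B C x y z = B x (C y z) :=
  rfl

end LinearMap

namespace TensorProduct

variable {k Ω A N : Type*} [CommSemiring k] [AddCommMonoid A] [Module k A]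
  [AddCommMonoid N] [Module k N]

theorem ext_tmul_single {f g : A ⊗[k] (Ω →₀ k) →ₗ[k] N}
    (h : ∀ (a : A) (α : Ω), f (a ⊗ₜ Finsupp.single α 1) = g (a ⊗ₜ Finsupp.single α 1)) :
    f = g :=
  TensorProduct.ext <| LinearMap.ext fun a =>
    Finsupp.lhom_ext' fun α => LinearMap.ext_ring (h a α)

theorem ext_tmul_single₃
    {F G : A ⊗[k] (Ω →₀ k) →ₗ[k] A ⊗[k] (Ω →₀ k) →ₗ[k] A ⊗[k] (Ω →₀ k) →ₗ[k] N}
    (h : ∀ (a b c : A) (α β γ : Ω),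
      F (a ⊗ₜ Finsupp.single α 1) (b ⊗ₜ Finsupp.single β 1) (c ⊗ₜ Finsupp.single γ 1) =
        G (a ⊗ₜ Finsupp.single α 1) (b ⊗ₜ Finsupp.single β 1) (c ⊗ₜ Finsupp.single γ 1)) :
    F = G :=
  ext_tmul_single fun a α => ext_tmul_single fun b β => ext_tmul_single fun c γ => h a b c α β γ

end TensorProduct

open TensorProduct in
theorem DendFamily.tensor_monoidAlgebra_dendriform_general
    (k Ω A : Type*) [CommRing k] [Semigroup Ω]
    [AddCommGroup A] [Module k A] (D : DendFamily k Ω A)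
    (P S : (A ⊗[k] (Ω →₀ k)) →ₗ[k] (A ⊗[k] (Ω →₀ k)) →ₗ[k] (A ⊗[k] (Ω →₀ k)))
    (hP : ∀ (a b : A) (α β : Ω),
      P (a ⊗ₜ[k] Finsupp.single α 1) (b ⊗ₜ[k] Finsupp.single β 1) =
        (D.prec β a b) ⊗ₜ[k] Finsupp.single (α * β) 1)
    (hS : ∀ (a b : A) (α β : Ω),
      S (a ⊗ₜ[k] Finsupp.single α 1) (b ⊗ₜ[k] Finsupp.single β 1) =
        (D.succ α a b) ⊗ₜ[k] Finsupp.single (α * β) 1) :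
    ∀ x y z : A ⊗[k] (Ω →₀ k),
      P (P x y) z = P x (P y z + S y z) ∧
      P (S x y) z = S x (P y z) ∧
      S (P x y + S x y) z = S x (S y z) := by
  have prec_prec : P.compr₂ P = P.nestRight (P + S) :=
    ext_tmul_single₃ fun a b c α β γ => by
      simp [hP, hS, D.prec_prec, mul_assoc, add_tmul]
  have succ_prec : S.compr₂ P = S.nestRight P :=
    ext_tmul_single₃ fun a b c α β γ => by
      simp [hP, hS, D.succ_prec, mul_assoc]
  have succ_succ : (P + S).compr₂ S = S.nestRight S :=
    ext_tmul_single₃ fun a b c α β γ => by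
      simp [hP, hS, ← D.succ_succ, mul_assoc, add_tmul]
  exact fun x y z =>
    ⟨congr($prec_prec x y z), congr($succ_prec x y z), congr($succ_succ x y z)⟩

open TensorProduct in
/-- If `(A, {≺_α, ≻_α})` is a dendriform-family algebra, then
`A ⊗ k[Ω]` (with `k[Ω] = Ω →₀ k` the free `k`-module on `Ω`), equipped with the
bilinear operations `P`, `S` determined on pure tensors by
`(a ⊗ α) ≺ (b ⊗ β) = (a ≺_β b) ⊗ αβ` and `(a ⊗ α) ≻ (b ⊗ β) = (a ≻_α b) ⊗ αβ`,
is a dendriform algebra. -/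
theorem DendFamily.tensor_monoidAlgebra_dendriform
    (k Ω A : Type*) [CommRing k] [CharZero k] [Semigroup Ω]
    [AddCommGroup A] [Module k A] (D : DendFamily k Ω A)
    (P S : (A ⊗[k] (Ω →₀ k)) →ₗ[k] (A ⊗[k] (Ω →₀ k)) →ₗ[k] (A ⊗[k] (Ω →₀ k)))
    (hP : ∀ (a b : A) (α β : Ω),
      P (a ⊗ₜ[k] Finsupp.single α 1) (b ⊗ₜ[k] Finsupp.single β 1) =
        (D.prec β a b) ⊗ₜ[k] Finsupp.single (α * β) 1)
    (hS : ∀ (a b : A) (α β : Ω),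
      S (a ⊗ₜ[k] Finsupp.single α 1) (b ⊗ₜ[k] Finsupp.single β 1) =
        (D.succ α a b) ⊗ₜ[k] Finsupp.single (α * β) 1) :
    ∀ x y z : A ⊗[k] (Ω →₀ k),
      P (P x y) z = P x (P y z + S y z) ∧
      P (S x y) z = S x (P y z) ∧
      S (P x y + S x y) z = S x (S y z) :=
  DendFamily.tensor_monoidAlgebra_dendriform_general k Ω A D P S hP hS
end

section
/- Let Ω be a semigroup and (A, {≺_α, ≻_α}_{α∈Ω}) a dendriform-family algebra over a commutative ring k. Define bilinear operations ·_{α,β} : A ⊗ A → A for α, β ∈ Ω by a ·_{α,β} b := a ≺_β b + a ≻_α b. Then (A, {·_{α,β}}_{α,β∈Ω}) is an associative algebra relative to Ω; that is, (a ·_{α,β} b) ·_{αβ,γ} c = a ·_{α,βγ} (b ·_{β,γ} c) for all a, b, c ∈ A and α, β, γ ∈ Ω. -/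
/-- If `(A, {≺_α, ≻_α})` is a dendriform-family algebra, then the
operations `a ·_{α,β} b := a ≺_β b + a ≻_α b` make `A` an associative algebra relative
to `Ω`: `(a ·_{α,β} b) ·_{αβ,γ} c = a ·_{α,βγ} (b ·_{β,γ} c)`. -/
theorem DendFamily.total_relative_associative
    (k Ω A : Type*) [CommRing k] [CharZero k] [Semigroup Ω]
    [AddCommGroup A] [Module k A] (D : DendFamily k Ω A) :
    ∀ (a b c : A) (α β γ : Ω),
      D.prec γ (D.prec β a b + D.succ α a b) c +
          D.succ (α * β) (D.prec β a b + D.succ α a b) c =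
        D.prec (β * γ) a (D.prec γ b c + D.succ β b c) +
          D.succ α a (D.prec γ b c + D.succ β b c) := by
  intro a b c α β γ
  have h1 := D.prec_prec β γ a b c
  have h2 := D.succ_prec α γ a b c
  have h3 := D.succ_succ α β a b c
  simp only [map_add, LinearMap.add_apply] at *
  linear_combination (norm := abel) h1 + h2 + h3
end

section
/- Let Ω be a semigroup, A an associative (not necessarily unital) algebra over a commutative ring k with product ·, and {R_α : A → A}_{α∈Ω} a Rota-Baxter family on A, i.e. a collection of k-linear maps satisfying R_α(a) · R_β(b) = R_{αβ}(R_α(a) · b + a · R_β(b)) for all a, b ∈ A and α, β ∈ Ω. Then the operations a ≺_α b := a · R_α(b) and a ≻_α b := R_α(a) · b make (A, {≺_α, ≻_α}_{α∈Ω}) a dendriform-family algebra. -/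
def IsRotaBaxterFamily {k Ω A : Type*} [CommSemiring k] [Mul Ω] [NonUnitalNonAssocSemiring A]
    [Module k A] (R : Ω → A →ₗ[k] A) : Prop :=
  ∀ (α β : Ω) (a b : A), R α a * R β b = R (α * β) (R α a * b + a * R β b)

namespace IsRotaBaxterFamily

variable {k Ω A : Type*} [CommRing k] [Semigroup Ω] [NonUnitalRing A] [Module k A]
  [IsScalarTower k A A] [SMulCommClass k A A] {R : Ω → A →ₗ[k] A}

def dendFamily (hR : IsRotaBaxterFamily R) : DendFamily k Ω A where
  prec α := (LinearMap.mul k A).compl₂ (R α)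
  succ α := (LinearMap.mul k A).comp (R α)
  prec_prec α β a b c := show a * R α b * R β c = a * R (α * β) (b * R β c + R α b * c) by
    rw [mul_assoc, hR, add_comm]
  succ_prec α β a b c := show R α a * b * R β c = R α a * (b * R β c) from mul_assoc ..
  succ_succ α β a b c := show R (α * β) (a * R β b + R α a * b) * c = R α a * (R β b * c) by
    rw [add_comm, ← hR, mul_assoc]

theorem dendFamily_prec_apply (hR : IsRotaBaxterFamily R) (α : Ω) (a b : A) :
    hR.dendFamily.prec α a b = a * R α b :=
  rfl

theorem dendFamily_succ_apply (hR : IsRotaBaxterFamily R) (α : Ω) (a b : A) :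
    hR.dendFamily.succ α a b = R α a * b :=
  rfl

end IsRotaBaxterFamily

theorem rotaBaxterFamily_gives_dendFamily_general
    (k Ω A : Type*) [CommRing k] [Semigroup Ω]
    [NonUnitalRing A] [Module k A] [IsScalarTower k A A] [SMulCommClass k A A]
    (R : Ω → A →ₗ[k] A)
    (hR : ∀ (α β : Ω) (a b : A),
      R α a * R β b = R (α * β) (R α a * b + a * R β b)) :
    ∃ D : DendFamily k Ω A,
      (∀ (α : Ω) (a b : A), D.prec α a b = a * R α b) ∧
      (∀ (α : Ω) (a b : A), D.succ α a b = R α a * b) :=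
  ⟨IsRotaBaxterFamily.dendFamily hR, IsRotaBaxterFamily.dendFamily_prec_apply hR,
    IsRotaBaxterFamily.dendFamily_succ_apply hR⟩

/-- Let `A` be an associative (not necessarily unital) algebra over
`k` and `{R_α}_{α∈Ω}` a Rota-Baxter family on `A`, i.e. `k`-linear maps with
`R_α(a) · R_β(b) = R_{αβ}(R_α(a) · b + a · R_β(b))`. Then `a ≺_α b := a · R_α(b)` and
`a ≻_α b := R_α(a) · b` make `A` a dendriform-family algebra. -/
theorem rotaBaxterFamily_gives_dendFamily
    (k Ω A : Type*) [CommRing k] [CharZero k] [Semigroup Ω]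
    [NonUnitalRing A] [Module k A] [IsScalarTower k A A] [SMulCommClass k A A]
    (R : Ω → A →ₗ[k] A)
    (hR : ∀ (α β : Ω) (a b : A),
      R α a * R β b = R (α * β) (R α a * b + a * R β b)) :
    ∃ D : DendFamily k Ω A,
      (∀ (α : Ω) (a b : A), D.prec α a b = a * R α b) ∧
      (∀ (α : Ω) (a b : A), D.succ α a b = R α a * b) :=
  rotaBaxterFamily_gives_dendFamily_general k Ω A R hR
end

section
/- Let Ω be a semigroup and (𝒜, {η¹, η², …}) a Dend_∞-family algebra over a commutative ring k. For each k ≥ 1 and α₁,…,α_k ∈ Ω define μ^k_{α₁,…,α_k} := η^{k,[1]}_{α₁,…,α_k} + ⋯ + η^{k,[k]}_{α₁,…,α_k}. Then (𝒜, {μ¹, μ², …}) is an A_∞-algebra relative to Ω; that is, for every N ≥ 1, all homogeneous a₁,…,a_N ∈ 𝒜 and all α₁,…,α_N ∈ Ω: Σ_{m+n=N+1} Σ_{i=1}^m (−1)^{i(n+1)+n(|a₁|+⋯+|a_{i−1}|)} μ^m_{α₁,…,α_{i−1}, α_i⋯α_{i+n−1}, α_{i+n},…,α_N}(a₁,…,a_{i−1},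 μ^n_{α_i,…,α_{i+n−1}}(a_i,…,a_{i+n−1}), a_{i+n},…,a_N) = 0. -/
namespace DendInfFamily

variable {k : Type*} [CommRing k] {Ω : Type*} [Semigroup Ω]
variable {𝒜 : ℤ → Type*} [∀ i, AddCommGroup (𝒜 i)] [∀ i, Module k (𝒜 i)]

/-- Homogeneous elements of the graded module `𝒜 = ⊕_{e ∈ ℤ} 𝒜 e`: pairs of a degree
and an element of that degree. -/
abbrev HElt (𝒜 : ℤ → Type*) : Type _ := Σ e : ℤ, 𝒜 e

/-- Projection of a homogeneous element onto the degree-`e` component (zero if the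
degrees do not match). -/
def proj (e : ℤ) (x : HElt 𝒜) : 𝒜 e := if h : x.1 = e then h ▸ x.2 else 0

/-- Multilinear-map data on the graded module `𝒜`, labelled by tuples of elements of
`Ω`: a map taking labels `α : ℕ → Ω`, degrees `d : ℕ → ℤ` and homogeneous arguments
`a s : 𝒜 (d s)` (positions are 1-based, only positions `1, …, k` are relevant for a
`k`-ary map) to a homogeneous element. -/
def FMap (Ω : Type*) (𝒜 : ℤ → Type*) : Type _ :=
  (ℕ → Ω) → (d : ℕ → ℤ) → ((s : ℕ) → 𝒜 (d s)) → HElt 𝒜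

/-- The condition that a `kk`-ary map has degree `kk - 2`. -/
def DegCond (kk : ℕ) (η : FMap Ω 𝒜) : Prop :=
  ∀ (α : ℕ → Ω) (d : ℕ → ℤ) (a : (s : ℕ) → 𝒜 (d s)),
    (η α d a).1 = (∑ s ∈ Finset.Icc 1 kk, d s) + kk - 2

/-- The ordered semigroup product `α a * α (a+1) * ⋯ * α (a+l)` of `l+1` factors. -/
def sprod (α : ℕ → Ω) (a : ℕ) : ℕ → Ω
  | 0 => α a
  | l + 1 => sprod α a l * α (a + l + 1)

/-- The label tuple `(α₁, …, α_{i−1}, α_i ⋯ α_{i+n−1}, α_{i+n}, …)` obtained from `α`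
by contracting the `n` labels starting at position `i` to their product. -/
def ashiftΩ (n i : ℕ) (α : ℕ → Ω) : ℕ → Ω := fun s =>
  if s < i then α s else if s = i then sprod α i (n - 1) else α (s + n - 1)

/-- The degree tuple `(d₁, …, d_{i−1}, e, d_{i+n}, …)` obtained from `d` by replacing
the `n` degrees starting at position `i` by the single degree `e`. -/
def dshift (n i : ℕ) (d : ℕ → ℤ) (e : ℤ) : ℕ → ℤ := fun s =>
  if s < i then d s else if s = i then e else d (s + n - 1)

/-- The argument tuple `(a₁, …, a_{i−1}, x, a_{i+n}, …)` obtained from `a` by replacing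
the `n` arguments starting at position `i` by the homogeneous element `x`. -/
def ashift (n i : ℕ) {d : ℕ → ℤ} (a : (s : ℕ) → 𝒜 (d s)) (x : HElt 𝒜) :
    (s : ℕ) → 𝒜 (dshift n i d x.1 s) := fun s =>
  if h1 : s < i then cast (congrArg 𝒜 (by simp [dshift, h1])) (a s)
  else if h2 : s = i then cast (congrArg 𝒜 (by simp [dshift, h1, h2])) x.2
  else cast (congrArg 𝒜 (by simp [dshift, h1, h2])) (a (s + n - 1))

/-- The composite term
`μout_{α₁,…,α_{i−1}, α_i⋯α_{i+n−1}, …}(a₁, …, a_{i−1}, μin_{α_i,…,α_{i+n−1}}(a_i, …, a_{i+n−1}), a_{i+n}, …)`. -/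
def compTerm (μout μin : FMap Ω 𝒜) (n i : ℕ) (α : ℕ → Ω) (d : ℕ → ℤ)
    (a : (s : ℕ) → 𝒜 (d s)) : HElt 𝒜 :=
  let x := μin (fun t => α (i - 1 + t)) (fun t => d (i - 1 + t)) (fun t => a (i - 1 + t))
  μout (ashiftΩ n i α) (dshift n i d x.1) (ashift n i a x)

/-- The sum `η^{[1]} + ⋯ + η^{[n]}` of the components of an `n`-ary family of maps,
as a single homogeneous-valued map (of degree `n − 2`). -/
def hsum (n : ℕ) (η : ℕ → FMap Ω 𝒜) : FMap Ω 𝒜 := fun α d a =>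
  ⟨(∑ s ∈ Finset.Icc 1 n, d s) + n - 2,
    ∑ r ∈ Finset.Icc 1 n, proj ((∑ s ∈ Finset.Icc 1 n, d s) + n - 2) (η r α d a)⟩

/-- The sign `(−1)^e` as an integer, for `e : ℤ`. -/
def esign (e : ℤ) : ℤ := (((-1 : ℤˣ) ^ e : ℤˣ) : ℤ)

/-- The combinatorial map `R₀(m; 1,…,n,…,1)` (with `n` at the `i`-th place):
`[r] ↦ [r]` if `r ≤ i−1`, `[r] ↦ [i]` if `i ≤ r ≤ i+n−1`, `[r] ↦ [r−n+1]` if `r ≥ i+n`. -/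
def R0 (n i r : ℕ) : ℕ := if r < i then r else if r ≤ i + n - 1 then i else r - n + 1

/-- The inner map `η^{n, R_i(m;1,…,n,…,1)[r]}`: the single component `η^{n,[r−i+1]}`
when `i ≤ r ≤ i+n−1`, and the formal sum `η^{n,[1]+⋯+[n]}` otherwise. -/
def innerD (n i r : ℕ) (η : ℕ → FMap Ω 𝒜) : FMap Ω 𝒜 :=
  if i ≤ r ∧ r ≤ i + n - 1 then η (r - i + 1) else hsum n η

end DendInfFamily

/-!
Fix `m` and `i` and sum the `r`-th `Dend_∞`-family identity over `r ∈ {1, …, N}`. For `r`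
outside the block `i, …, i+n−1` the inner map is already `μⁿ = Σ_σ η^{n,[σ]}`, and the
outer index `R₀[r]` runs bijectively over `{1, …, m} \ {i}`. For `r` inside the block the
outer index is `i` and the inner index `r−i+1` runs over `{1, …, n}`, so by additivity of
`η^{m,[i]}` in its `i`-th slot these terms add up to `η^{m,[i]} ∘ᵢ μⁿ`. Hence the `(m, i)`-terms
summed over `r` give `μᵐ ∘ᵢ μⁿ`, and the `A_∞`-identity is the sum of the `Dend_∞`-identities.
-/

namespace DendInfFamily

variable {Ω : Type*} {𝒜 : ℤ → Type*}

theorem dshift_self (n i : ℕ) (d : ℕ → ℤ) (e : ℤ) : dshift n i d e i = e := by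
  simp [dshift]

theorem ashift_mk_eq_update (n i : ℕ) {d : ℕ → ℤ} (a : (s : ℕ) → 𝒜 (d s)) (c : ℤ)
    (v w : 𝒜 c) :
    (ashift n i a ⟨c, v⟩ : (s : ℕ) → 𝒜 (dshift n i d c s)) =
      Function.update (ashift n i a ⟨c, w⟩) i
        (cast (congrArg 𝒜 (dshift_self n i d c).symm) v) := by
  funext s
  by_cases hs : s = i
  · subst hs
    rw [Function.update_self]
    simp [ashift]
  · rw [Function.update_of_ne hs]
    by_cases h1 : s < i <;> simp [ashift, h1, hs]

variable [∀ i, AddCommGroup (𝒜 i)]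

def IsAddInSlot (t : ℕ) (μ : FMap Ω 𝒜) : Prop :=
  ∀ (α : ℕ → Ω) (d : ℕ → ℤ) (a : (s : ℕ) → 𝒜 (d s)) (x y : 𝒜 (d t)) (e : ℤ),
    proj e (μ α d (Function.update a t (x + y))) =
      proj e (μ α d (Function.update a t x)) + proj e (μ α d (Function.update a t y))

theorem proj_mk (e : ℤ) (v : 𝒜 e) : proj e (⟨e, v⟩ : HElt 𝒜) = v := by
  simp [proj]

theorem proj_of_ne {e : ℤ} {x : HElt 𝒜} (h : x.1 ≠ e) : proj e x = 0 := dif_neg h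

theorem eq_mk_proj {e : ℤ} (x : HElt 𝒜) (h : x.1 = e) : x = ⟨e, proj e x⟩ := by
  obtain ⟨f, v⟩ := x
  subst h
  rw [proj_mk]

theorem cast_congrArg_add {c e : ℤ} (h : c = e) (v w : 𝒜 c) :
    cast (congrArg 𝒜 h) (v + w) = cast (congrArg 𝒜 h) v + cast (congrArg 𝒜 h) w := by
  subst h
  rfl

theorem proj_hsum (n : ℕ) (η : ℕ → FMap Ω 𝒜) (α : ℕ → Ω) (d : ℕ → ℤ)
    (a : (s : ℕ) → 𝒜 (d s)) (e : ℤ) (hη : ∀ r, 1 ≤ r → r ≤ n → DegCond n (η r)) :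
    proj e (hsum n η α d a) = ∑ r ∈ Finset.Icc 1 n, proj e (η r α d a) := by
  by_cases hD : (∑ s ∈ Finset.Icc 1 n, d s) + n - 2 = e
  · subst hD
    exact proj_mk _ _
  · rw [proj_of_ne (x := hsum n η α d a) hD]
    refine (Finset.sum_eq_zero fun r hr => proj_of_ne ?_).symm
    rw [Finset.mem_Icc] at hr
    rwa [hη r hr.1 hr.2 α d a]

variable [Semigroup Ω]

def insertAddHom {μ : FMap Ω 𝒜} {i : ℕ} (hμ : IsAddInSlot i μ) (n : ℕ) (α : ℕ → Ω)
    (d : ℕ → ℤ) (a : (s : ℕ) → 𝒜 (d s)) (E c : ℤ) : 𝒜 c →+ 𝒜 E :=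
  AddMonoidHom.mk'
    (fun v => proj E (μ (ashiftΩ n i α) (dshift n i d c) (ashift n i a ⟨c, v⟩)))
    (fun v w => by
      change proj E (μ _ _ _) = proj E (μ _ _ _) + proj E (μ _ _ _)
      rw [ashift_mk_eq_update n i a c (v + w) 0, ashift_mk_eq_update n i a c v 0,
        ashift_mk_eq_update n i a c w 0, cast_congrArg_add (dshift_self n i d c).symm]
      exact hμ _ _ _ _ _ E)

theorem proj_compTerm_of_inner_eq {μ ν : FMap Ω 𝒜} {i : ℕ} (hμ : IsAddInSlot i μ) (n : ℕ)
    {α : ℕ → Ω} {d : ℕ → ℤ} {a : (s : ℕ) → 𝒜 (d s)} {c : ℤ} {v : 𝒜 c}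
    (h : ν (fun t => α (i - 1 + t)) (fun t => d (i - 1 + t)) (fun t => a (i - 1 + t)) =
      ⟨c, v⟩) (E : ℤ) :
    proj E (compTerm μ ν n i α d a) = insertAddHom hμ n α d a E c v := by
  simp only [compTerm]
  rw [h]
  rfl

theorem proj_compTerm_hsum {μ : FMap Ω 𝒜} {i : ℕ} (hμ : IsAddInSlot i μ) (n : ℕ)
    (η : ℕ → FMap Ω 𝒜) (hη : ∀ σ, 1 ≤ σ → σ ≤ n → DegCond n (η σ)) (α : ℕ → Ω)
    (d : ℕ → ℤ) (a : (s : ℕ) → 𝒜 (d s)) (E : ℤ) :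
    proj E (compTerm μ (hsum n η) n i α d a) =
      ∑ σ ∈ Finset.Icc 1 n, proj E (compTerm μ (η σ) n i α d a) := by
  rw [proj_compTerm_of_inner_eq hμ n rfl, map_sum]
  refine Finset.sum_congr rfl fun σ hσ => ?_
  rw [Finset.mem_Icc] at hσ
  rw [proj_compTerm_of_inner_eq hμ n (eq_mk_proj _ (hη σ hσ.1 hσ.2 _ _ _))]

theorem sum_proj_compTerm_R0_innerD {N m n i : ℕ} (hN : m + n = N + 1) (hn : 1 ≤ n)
    (hi : 1 ≤ i) (him : i ≤ m) (ηout ηin : ℕ → FMap Ω 𝒜)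
    (hout : ∀ ρ, 1 ≤ ρ → ρ ≤ m → DegCond m (ηout ρ))
    (hin : ∀ σ, 1 ≤ σ → σ ≤ n → DegCond n (ηin σ)) (hadd : IsAddInSlot i (ηout i))
    (α : ℕ → Ω) (d : ℕ → ℤ) (a : (s : ℕ) → 𝒜 (d s)) (E : ℤ) :
    ∑ r ∈ Finset.Icc 1 N, proj E (compTerm (ηout (R0 n i r)) (innerD n i r ηin) n i α d a) =
      proj E (compTerm (hsum m ηout) (hsum n ηin) n i α d a) := by
  set T : ℕ → 𝒜 E := fun ρ => proj E (compTerm (ηout ρ) (hsum n ηin) n i α d a)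
  have hT : proj E (compTerm (hsum m ηout) (hsum n ηin) n i α d a) =
      ∑ ρ ∈ Finset.Icc 1 m, T ρ :=
    proj_hsum m ηout _ _ _ E hout
  have before : ∑ r ∈ Finset.Ico 1 i,
      proj E (compTerm (ηout (R0 n i r)) (innerD n i r ηin) n i α d a) =
        ∑ ρ ∈ Finset.Ico 1 i, T ρ := by
    refine Finset.sum_congr rfl fun r hr => ?_
    rw [Finset.mem_Ico] at hr
    rw [show R0 n i r = r from if_pos hr.2, show innerD n i r ηin = hsum n ηin by
      rw [innerD, if_neg (by omega)]]
  have inside : ∑ r ∈ Finset.Ico i (i + n),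
      proj E (compTerm (ηout (R0 n i r)) (innerD n i r ηin) n i α d a) = T i := by
    change _ = proj E (compTerm (ηout i) (hsum n ηin) n i α d a)
    rw [proj_compTerm_hsum hadd n ηin hin, ← Finset.Ico_add_one_right_eq_Icc,
      show Finset.Ico i (i + n) = Finset.Ico (1 + (i - 1)) (n + 1 + (i - 1)) by
        congr 1 <;> omega,
      ← Finset.sum_Ico_add']
    refine Finset.sum_congr rfl fun σ hσ => ?_
    rw [Finset.mem_Ico] at hσ
    rw [show R0 n i (σ + (i - 1)) = i by unfold R0; split_ifs <;> omega,
      show innerD n i (σ + (i - 1)) ηin = ηin σ by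
        rw [innerD, if_pos (by omega)]; congr 1; omega]
  have after : ∑ r ∈ Finset.Ico (i + n) (N + 1),
      proj E (compTerm (ηout (R0 n i r)) (innerD n i r ηin) n i α d a) =
        ∑ ρ ∈ Finset.Ico (i + 1) (m + 1), T ρ := by
    rw [show Finset.Ico (i + n) (N + 1) = Finset.Ico (i + 1 + (n - 1)) (m + 1 + (n - 1)) by
        congr 1 <;> omega,
      ← Finset.sum_Ico_add']
    refine Finset.sum_congr rfl fun ρ hρ => ?_
    rw [Finset.mem_Ico] at hρ
    rw [show R0 n i (ρ + (n - 1)) = ρ by unfold R0; split_ifs <;> omega,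
      show innerD n i (ρ + (n - 1)) ηin = hsum n ηin by
        rw [innerD, if_neg (by omega)]]
  rw [hT, ← Finset.Ico_add_one_right_eq_Icc, ← Finset.Ico_add_one_right_eq_Icc,
    ← Finset.sum_Ico_consecutive _ hi (show i ≤ N + 1 by omega),
    ← Finset.sum_Ico_consecutive _ (show i ≤ i + n by omega) (show i + n ≤ N + 1 by omega),
    ← Finset.sum_Ico_consecutive _ hi (show i ≤ m + 1 by omega),
    Finset.sum_eq_sum_Ico_succ_bot (show i < m + 1 by omega), before, inside, after]

end DendInfFamily

open DendInfFamily in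
theorem dendInfFamily_gives_AInfRelative_general
    (k : Type*) [CommRing k] (Ω : Type*) [Semigroup Ω]
    (𝒜 : ℤ → Type*) [∀ i, AddCommGroup (𝒜 i)] [∀ i, Module k (𝒜 i)]
    (η : ℕ → ℕ → FMap Ω 𝒜)
    -- each `η^{k,[r]}` has degree `k − 2`
    (hdeg : ∀ kk r : ℕ, 1 ≤ r → r ≤ kk → DegCond kk (η kk r))
    -- each `η^{k,[r]}` is multilinear: additive and `k`-homogeneous in every slot
    (hadd : ∀ kk r : ℕ, 1 ≤ r → r ≤ kk →
      ∀ (α : ℕ → Ω) (d : ℕ → ℤ) (a : (s : ℕ) → 𝒜 (d s)) (t : ℕ), 1 ≤ t → t ≤ kk →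
      ∀ (x y : 𝒜 (d t)) (e : ℤ),
        proj e (η kk r α d (Function.update a t (x + y))) =
          proj e (η kk r α d (Function.update a t x)) +
            proj e (η kk r α d (Function.update a t y)))
    -- the `Dend_∞`-family identities
    (hdend : ∀ N : ℕ, 1 ≤ N → ∀ r ∈ Finset.Icc 1 N,
      ∀ (α : ℕ → Ω) (d : ℕ → ℤ) (a : (s : ℕ) → 𝒜 (d s)),
        ∑ m ∈ Finset.Icc 1 N, ∑ i ∈ Finset.Icc 1 m,
          esign (((i * (N + 2 - m) : ℕ) : ℤ) +
              ((N + 1 - m : ℕ) : ℤ) * ∑ s ∈ Finset.Icc 1 (i - 1), d s) •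
            proj ((∑ s ∈ Finset.Icc 1 N, d s) + N - 3)
              (compTerm (η m (R0 (N + 1 - m) i r)) (innerD (N + 1 - m) i r (η (N + 1 - m)))
                (N + 1 - m) i α d a) = 0) :
    -- conclusion: `μ^k = η^{k,[1]} + ⋯ + η^{k,[k]}` has degree `k − 2` and satisfies
    -- the `A_∞`-identities relative to `Ω`
    (∀ kk : ℕ, 1 ≤ kk → DegCond kk (hsum kk (η kk))) ∧
    (∀ N : ℕ, 1 ≤ N →
      ∀ (α : ℕ → Ω) (d : ℕ → ℤ) (a : (s : ℕ) → 𝒜 (d s)),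
        ∑ m ∈ Finset.Icc 1 N, ∑ i ∈ Finset.Icc 1 m,
          esign (((i * (N + 2 - m) : ℕ) : ℤ) +
              ((N + 1 - m : ℕ) : ℤ) * ∑ s ∈ Finset.Icc 1 (i - 1), d s) •
            proj ((∑ s ∈ Finset.Icc 1 N, d s) + N - 3)
              (compTerm (hsum m (η m)) (hsum (N + 1 - m) (η (N + 1 - m)))
                (N + 1 - m) i α d a) = 0) := by
  refine ⟨fun kk _ α d a => rfl, fun N hN α d a => ?_⟩
  refine Eq.trans ?_ (Finset.sum_eq_zero fun r hr => hdend N hN r hr α d a)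
  conv_rhs => rw [Finset.sum_comm]
  refine Finset.sum_congr rfl fun m hm => ?_
  rw [Finset.sum_comm]
  refine Finset.sum_congr rfl fun i hi => ?_
  rw [Finset.mem_Icc] at hm hi
  have hslot : IsAddInSlot i (η m i) := fun α d a x y e =>
    hadd m i hi.1 hi.2 α d a i hi.1 hi.2 x y e
  rw [← Finset.smul_sum, sum_proj_compTerm_R0_innerD (by omega) (by omega) hi.1 hi.2 _ _
    (hdeg m) (hdeg _) hslot]

open DendInfFamily in
/-- Let `Ω` be a semigroup and `(𝒜, {η¹, η², …})` a `Dend_∞`-family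
algebra: each `η^k = (η^{k,[1]}, …, η^{k,[k]})` is a `k`-tuple of families of degree
`k−2` multilinear maps labelled by `Ω^k`, `η^{k,[r]}` not depending on the `r`-th label,
satisfying the `Dend_∞`-family identities.  Define
`μ^k := η^{k,[1]} + ⋯ + η^{k,[k]}`.  Then `(𝒜, {μ¹, μ², …})` is an `A_∞`-algebra
relative to `Ω`: each `μ^k` has degree `k−2` and for every `N ≥ 1`, all homogeneous
arguments and all labels the `A_∞`-identity relative to `Ω` holds. -/
theorem dendInfFamily_gives_AInfRelative
    (k : Type*) [CommRing k] [CharZero k] (Ω : Type*) [Semigroup Ω]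
    (𝒜 : ℤ → Type*) [∀ i, AddCommGroup (𝒜 i)] [∀ i, Module k (𝒜 i)]
    (η : ℕ → ℕ → FMap Ω 𝒜)
    -- each `η^{k,[r]}` has degree `k − 2`
    (hdeg : ∀ kk r : ℕ, 1 ≤ r → r ≤ kk → DegCond kk (η kk r))
    -- each `η^{k,[r]}` is multilinear: additive and `k`-homogeneous in every slot
    (hadd : ∀ kk r : ℕ, 1 ≤ r → r ≤ kk →
      ∀ (α : ℕ → Ω) (d : ℕ → ℤ) (a : (s : ℕ) → 𝒜 (d s)) (t : ℕ), 1 ≤ t → t ≤ kk →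
      ∀ (x y : 𝒜 (d t)) (e : ℤ),
        proj e (η kk r α d (Function.update a t (x + y))) =
          proj e (η kk r α d (Function.update a t x)) +
            proj e (η kk r α d (Function.update a t y)))
    (hsmul : ∀ kk r : ℕ, 1 ≤ r → r ≤ kk →
      ∀ (α : ℕ → Ω) (d : ℕ → ℤ) (a : (s : ℕ) → 𝒜 (d s)) (t : ℕ), 1 ≤ t → t ≤ kk →
      ∀ (c : k) (x : 𝒜 (d t)) (e : ℤ),
        proj e (η kk r α d (Function.update a t (c • x))) =
          c • proj e (η kk r α d (Function.update a t x)))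
    -- `η^{k,[r]}` does not depend on the label `α_r`
    (hfam : ∀ kk r : ℕ, 1 ≤ r → r ≤ kk →
      ∀ (α α' : ℕ → Ω) (d : ℕ → ℤ) (a : (s : ℕ) → 𝒜 (d s)),
        (∀ s : ℕ, s ≠ r → α s = α' s) → η kk r α d a = η kk r α' d a)
    -- the `Dend_∞`-family identities
    (hdend : ∀ N : ℕ, 1 ≤ N → ∀ r ∈ Finset.Icc 1 N,
      ∀ (α : ℕ → Ω) (d : ℕ → ℤ) (a : (s : ℕ) → 𝒜 (d s)),
        ∑ m ∈ Finset.Icc 1 N, ∑ i ∈ Finset.Icc 1 m,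
          esign (((i * (N + 2 - m) : ℕ) : ℤ) +
              ((N + 1 - m : ℕ) : ℤ) * ∑ s ∈ Finset.Icc 1 (i - 1), d s) •
            proj ((∑ s ∈ Finset.Icc 1 N, d s) + N - 3)
              (compTerm (η m (R0 (N + 1 - m) i r)) (innerD (N + 1 - m) i r (η (N + 1 - m)))
                (N + 1 - m) i α d a) = 0) :
    -- conclusion: `μ^k = η^{k,[1]} + ⋯ + η^{k,[k]}` has degree `k − 2` and satisfies
    -- the `A_∞`-identities relative to `Ω`
    (∀ kk : ℕ, 1 ≤ kk → DegCond kk (hsum kk (η kk))) ∧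
    (∀ N : ℕ, 1 ≤ N →
      ∀ (α : ℕ → Ω) (d : ℕ → ℤ) (a : (s : ℕ) → 𝒜 (d s)),
        ∑ m ∈ Finset.Icc 1 N, ∑ i ∈ Finset.Icc 1 m,
          esign (((i * (N + 2 - m) : ℕ) : ℤ) +
              ((N + 1 - m : ℕ) : ℤ) * ∑ s ∈ Finset.Icc 1 (i - 1), d s) •
            proj ((∑ s ∈ Finset.Icc 1 N, d s) + N - 3)
              (compTerm (hsum m (η m)) (hsum (N + 1 - m) (η (N + 1 - m)))
                (N + 1 - m) i α d a) = 0) :=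
  dendInfFamily_gives_AInfRelative_general k Ω 𝒜 η hdeg hadd hdend
end
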